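/- Let M = I_T + K_{TS}K_{SS}⁻²K_{ST}. Then I_T ⪯ M in the π-Löwner order, and for both choices V_{TT} = diag(1_TᵀM)⁻¹ (Type A) and V_{TT} = M⁻¹ (Type B), M ⪯ V_{TT}⁻¹ holds, i.e., V_{TT}⁻¹ − M is positive semi-definite with respect to the π_T-inner product. -/

import Mathlib

/-!
With `Π = diag π` and `x = Π⁻¹ a`, the `π`-form `∑ aᵢ (A a)ᵢ / πᵢ` is `xᵀ (A Π) x`, so every claim
is positive semidefiniteness of a matrix `A Π`.

Detailed balance makes `K_SS Π_S` symmetric; with nonnegative off-diagonal entries and nonpositive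
column sums, `-K_SS Π_S` is a graph Laplacian plus a nonnegative diagonal, hence positive definite
once invertible, and so `K_SS⁻¹ ≤ 0` entrywise (Stieltjes matrices have nonnegative inverses).
For `G = K_TS K_SS⁻¹ ≤ 0`, detailed balance gives `(M - 1) Π_T = G Π_S Gᵀ`, which is positive
semidefinite and entrywise nonnegative. Thus `M Π_T = Π_T + G Π_S Gᵀ` is positive definite, so
`(M⁻¹)⁻¹ = M`, and `(diag(1ᵀ M) - M) Π_T` is the Laplacian of the symmetric matrix `M Π_T`, whose
off-diagonal entries are nonnegative.
-/

open Matrix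

section SquareMatrix

variable {m : Type*} [Fintype m] [DecidableEq m]

theorem sum_mul_mulVec_div_nonneg_of_posSemidef {A : Matrix m m ℝ} {π : m → ℝ}
    (hπ : ∀ i, π i ≠ 0) (hA : (A * diagonal π).PosSemidef) (a : m → ℝ) :
    0 ≤ ∑ i, a i * (A *ᵥ a) i / π i := by
  set x : m → ℝ := fun i => a i / π i
  have hx : diagonal π *ᵥ x = a := funext fun i => by
    simp only [mulVec_diagonal, x]; field_simp [hπ i]
  calc 0 ≤ x ⬝ᵥ (A * diagonal π) *ᵥ x := by simpa using hA.dotProduct_mulVec_nonneg x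
    _ = ∑ i, a i * (A *ᵥ a) i / π i := by
      rw [← mulVec_mulVec, hx, dotProduct]
      exact Finset.sum_congr rfl fun i _ => by simp only [x]; ring

theorem two_mul_dotProduct_diagonal_sum_sub_mulVec {W : Matrix m m ℝ} (hW : Wᵀ = W)
    (x : m → ℝ) :
    2 * (x ⬝ᵥ (diagonal (fun j => ∑ i, W i j) - W) *ᵥ x) =
      ∑ i, ∑ j, W i j * (x i - x j) ^ 2 := by
  have hswap : ∑ i, ∑ j, W i j * x i ^ 2 = ∑ i, ∑ j, W i j * x j ^ 2 := by
    rw [Finset.sum_comm]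
    exact Finset.sum_congr rfl fun i _ => Finset.sum_congr rfl fun j _ => by
      rw [← transpose_apply W i j, hW]
  have hdiag : x ⬝ᵥ diagonal (fun j => ∑ i, W i j) *ᵥ x = ∑ i, ∑ j, W i j * x j ^ 2 := by
    simp only [dotProduct, mulVec_diagonal, Finset.sum_mul, Finset.mul_sum]
    conv_rhs => rw [Finset.sum_comm]
    exact Finset.sum_congr rfl fun i _ => Finset.sum_congr rfl fun j _ => by ring
  have hW : x ⬝ᵥ W *ᵥ x = ∑ i, ∑ j, x i * W i j * x j := by
    simp only [dotProduct, mulVec, Finset.mul_sum, mul_assoc]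
  have hexp : ∑ i, ∑ j, W i j * (x i - x j) ^ 2 =
      ∑ i, ∑ j, W i j * x i ^ 2 + ∑ i, ∑ j, W i j * x j ^ 2 -
        2 * ∑ i, ∑ j, x i * W i j * x j := by
    simp only [Finset.mul_sum, ← Finset.sum_add_distrib, ← Finset.sum_sub_distrib]
    exact Finset.sum_congr rfl fun i _ => Finset.sum_congr rfl fun j _ => by ring
  rw [hexp, hswap, sub_mulVec, dotProduct_sub, hdiag, hW]
  ring

theorem posSemidef_diagonal_sum_sub {W : Matrix m m ℝ} (hW : Wᵀ = W)
    (hoff : ∀ i j, i ≠ j → 0 ≤ W i j) :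
    (diagonal (fun j => ∑ i, W i j) - W).PosSemidef := by
  refine .of_dotProduct_mulVec_nonneg ?_ fun x => ?_
  · exact (isHermitian_diagonal _).sub
      (by rwa [IsHermitian, conjTranspose_eq_transpose_of_trivial])
  · rw [star_trivial, ← mul_nonneg_iff_of_pos_left two_pos,
      two_mul_dotProduct_diagonal_sum_sub_mulVec hW]
    refine Finset.sum_nonneg fun i _ => Finset.sum_nonneg fun j _ => ?_
    obtain rfl | hij := eq_or_ne i j
    · simp
    · exact mul_nonneg (hoff i j hij) (sq_nonneg _)

theorem Matrix.PosDef.inv_apply_nonneg_of_offDiag_nonpos {P : Matrix m m ℝ} (hP : P.PosDef)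
    (hoff : ∀ i j, i ≠ j → P i j ≤ 0) (i j : m) : 0 ≤ P⁻¹ i j := by
  set u := P⁻¹ *ᵥ Pi.single j 1
  have hPu : P *ᵥ u = Pi.single j 1 := by
    rw [mulVec_mulVec, mul_nonsing_inv _ ((isUnit_iff_isUnit_det P).mp hP.isUnit), one_mulVec]
  set p : m → ℝ := fun k => (u k)⁺
  set q : m → ℝ := fun k => (u k)⁻
  -- `p` and `q` have disjoint supports, so only off-diagonal entries of `P` meet in `q ⬝ᵥ P *ᵥ p`.
  have hqp : q ⬝ᵥ P *ᵥ p ≤ 0 := by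
    simp only [dotProduct, mulVec, Finset.mul_sum]
    refine Finset.sum_nonpos fun k _ => Finset.sum_nonpos fun l _ => ?_
    obtain rfl | hkl := eq_or_ne k l
    · rcases le_total 0 (u k) with h | h
      · simp [q, negPart_eq_zero.2 h]
      · simp [p, posPart_eq_zero.2 h]
    · exact mul_nonpos_of_nonneg_of_nonpos (negPart_nonneg _)
        (mul_nonpos_of_nonpos_of_nonneg (hoff k l hkl) (posPart_nonneg _))
  have hqq : q ⬝ᵥ P *ᵥ q ≤ 0 := by
    have hu : u = p - q := funext fun k => (posPart_sub_negPart (u k)).symm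
    have hqu : q ⬝ᵥ P *ᵥ u = q j := by rw [hPu, dotProduct_single, mul_one]
    rw [hu, mulVec_sub, dotProduct_sub] at hqu
    linarith [negPart_nonneg (u j)]
  have hq : q = 0 := by
    by_contra hq
    exact (hqq.trans_lt (by simpa using hP.dotProduct_mulVec_pos hq)).false
  have : (u i)⁻ = 0 := congr_fun hq i
  simpa [u, mulVec_single_one] using negPart_eq_zero.1 this

theorem posSemidef_neg_mul_diagonal_of_sum_nonpos {A : Matrix m m ℝ} {π : m → ℝ}
    (hπ : ∀ i, 0 ≤ π i) (hrev : A * diagonal π = diagonal π * Aᵀ)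
    (hoff : ∀ i j, i ≠ j → 0 ≤ A i j) (hcol : ∀ j, ∑ i, A i j ≤ 0) :
    (-(A * diagonal π)).PosSemidef := by
  set W := A * diagonal π
  have hW : Wᵀ = W := by rw [transpose_mul, diagonal_transpose, ← hrev]
  have hcolW : ∀ j, ∑ i, W i j = (∑ i, A i j) * π j := by
    simp [W, mul_diagonal, Finset.sum_mul]
  have hsplit : -W = (diagonal (fun j => ∑ i, W i j) - W) + diagonal (fun j => -∑ i, W i j) := by
    ext i j; by_cases h : i = j <;> simp [h]; ring
  rw [hsplit]
  refine (posSemidef_diagonal_sum_sub hW fun i j hij => ?_).add (.diagonal fun j => ?_)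
  · simpa [W] using mul_nonneg (hoff i j hij) (hπ j)
  · simpa [hcolW] using mul_nonpos_of_nonpos_of_nonneg (hcol j) (hπ j)

theorem inv_apply_nonpos_of_sum_nonpos {A : Matrix m m ℝ} {π : m → ℝ}
    (hπ : ∀ i, 0 < π i) (hrev : A * diagonal π = diagonal π * Aᵀ)
    (hoff : ∀ i j, i ≠ j → 0 ≤ A i j) (hcol : ∀ j, ∑ i, A i j ≤ 0) (hA : IsUnit A.det)
    (i j : m) : A⁻¹ i j ≤ 0 := by
  set P := -(A * diagonal π)
  have hPu : IsUnit P := ((isUnit_iff_isUnit_det A).2 hA).mul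
    (isUnit_diagonal.2 (Pi.isUnit_iff.2 fun i => (hπ i).ne'.isUnit)) |>.neg
  have hP : P.PosDef := (posSemidef_neg_mul_diagonal_of_sum_nonpos (fun i => (hπ i).le)
    hrev hoff hcol).posDef_iff_isUnit.2 hPu
  have hinv : A⁻¹ = -(diagonal π * P⁻¹) := inv_eq_right_inv <| by
    rw [mul_neg, ← Matrix.mul_assoc, ← neg_mul,
      mul_nonsing_inv _ ((isUnit_iff_isUnit_det P).1 hPu)]
  have hPinv := hP.inv_apply_nonneg_of_offDiag_nonpos (fun k l hkl => by
    simpa [P] using mul_nonneg (hoff k l hkl) (hπ l).le) i j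
  rw [hinv, neg_apply, diagonal_mul]
  exact neg_nonpos.2 (mul_nonneg (hπ i).le hPinv)

theorem diagonal_sum_sub_mul_diagonal (M : Matrix m m ℝ) (π : m → ℝ) :
    (diagonal (fun j => ∑ i, M i j) - M) * diagonal π =
      diagonal (fun j => ∑ i, (M * diagonal π) i j) - M * diagonal π := by
  rw [sub_mul, diagonal_mul_diagonal]
  simp only [mul_diagonal, Finset.sum_mul]

theorem posSemidef_inv_inv_diagonal_sum_sub_mul_diagonal {M H : Matrix m m ℝ} {π : m → ℝ}
    (hπ : ∀ i, 0 < π i) (hM : M * diagonal π = diagonal π + H) (hH : Hᵀ = H)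
    (hH_nonneg : ∀ i j, 0 ≤ H i j) :
    (((diagonal fun j => ∑ i, M i j)⁻¹⁻¹ - M) * diagonal π).PosSemidef := by
  have hcol : ∀ j, 0 < ∑ i, M i j := fun j => by
    have h : (∑ i, M i j) * π j = π j + ∑ i, H i j := by
      simp [Finset.sum_mul, ← mul_diagonal, hM, Finset.sum_add_distrib, diagonal_apply]
    have := Finset.sum_nonneg fun i (_ : i ∈ Finset.univ) => hH_nonneg i j
    exact pos_of_mul_pos_left (h ▸ by linarith [hπ j]) (hπ j).le
  have hdiag : IsUnit (diagonal fun j => ∑ i, M i j).det := (isUnit_iff_isUnit_det _).1 <|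
    isUnit_diagonal.2 <| Pi.isUnit_iff.2 fun j => (hcol j).ne'.isUnit
  rw [nonsing_inv_nonsing_inv _ hdiag, diagonal_sum_sub_mul_diagonal]
  refine posSemidef_diagonal_sum_sub (by rw [hM, transpose_add, diagonal_transpose, hH])
    fun i j hij => ?_
  rw [hM, Matrix.add_apply, diagonal_apply_ne _ hij, zero_add]
  exact hH_nonneg i j

end SquareMatrix

theorem submatrix_mul_diagonal_eq {ι α β : Type*} [Fintype ι] [DecidableEq ι] [Fintype α]
    [DecidableEq α] [Fintype β] [DecidableEq β] {K : Matrix ι ι ℝ} {π : ι → ℝ}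
    (hrev : K * diagonal π = diagonal π * Kᵀ) (f : α → ι) (g : β → ι) :
    K.submatrix f g * diagonal (fun j => π (g j)) =
      diagonal (fun i => π (f i)) * (K.submatrix g f)ᵀ := by
  ext i j
  simpa [mul_diagonal, diagonal_mul] using congr_fun (congr_fun hrev (f i)) (g j)

theorem sum_subtype_apply_nonpos {ι : Type*} [Fintype ι] [DecidableEq ι] {K : Matrix ι ι ℝ}
    (hoff : ∀ i j, i ≠ j → 0 ≤ K i j) (hcol : ∀ j, ∑ i, K i j = 0) (s : Finset ι) (j : s) :
    ∑ i : s, K i j ≤ 0 := by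
  have hout : 0 ≤ ∑ i ∈ sᶜ, K i j := Finset.sum_nonneg fun i hi =>
    hoff i j fun h => Finset.mem_compl.1 hi (h ▸ j.2)
  have := Finset.sum_add_sum_compl s (fun i => K i j)
  rw [hcol, ← Finset.sum_coe_sort s] at this
  linarith

theorem mul_inv_mul_inv_mul_mul_diagonal {s t : Type*} [Fintype s] [DecidableEq s] [Fintype t]
    [DecidableEq t] {A : Matrix s s ℝ} {B : Matrix s t ℝ} {C : Matrix t s ℝ} {πs : s → ℝ}
    {πt : t → ℝ} (hA : A * diagonal πs = diagonal πs * Aᵀ)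
    (hB : B * diagonal πt = diagonal πs * Cᵀ) (hAu : IsUnit A.det) :
    C * A⁻¹ * A⁻¹ * B * diagonal πt = C * A⁻¹ * diagonal πs * (C * A⁻¹)ᵀ := by
  have hAinv : A⁻¹ * diagonal πs = diagonal πs * A⁻¹ᵀ :=
    calc A⁻¹ * diagonal πs = A⁻¹ * (diagonal πs * Aᵀ) * Aᵀ⁻¹ := by
          rw [Matrix.mul_assoc, Matrix.mul_assoc, mul_nonsing_inv _ (isUnit_det_transpose A hAu),
            mul_one]
      _ = A⁻¹ * (A * diagonal πs) * Aᵀ⁻¹ := by rw [hA]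
      _ = diagonal πs * A⁻¹ᵀ := by
          rw [← Matrix.mul_assoc A⁻¹, nonsing_inv_mul _ hAu, one_mul, transpose_nonsing_inv]
  rw [Matrix.mul_assoc (C * A⁻¹ * A⁻¹), hB, transpose_mul, Matrix.mul_assoc (C * A⁻¹),
    ← Matrix.mul_assoc A⁻¹, hAinv]
  simp only [Matrix.mul_assoc]

theorem mul_diagonal_mul_transpose_apply_nonneg {s t : Type*} [Fintype s] [DecidableEq s]
    {G : Matrix t s ℝ} {π : s → ℝ} (hG : ∀ i k, G i k ≤ 0) (hπ : ∀ k, 0 ≤ π k) (i j : t) :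
    0 ≤ (G * diagonal π * Gᵀ) i j := by
  rw [mul_apply]
  refine Finset.sum_nonneg fun k _ => ?_
  rw [mul_diagonal, transpose_apply]
  exact mul_nonneg_of_nonpos_of_nonpos (mul_nonpos_of_nonpos_of_nonneg (hG i k) (hπ k)) (hG j k)

theorem posSemidef_mul_diagonal_mul_transpose {s t : Type*} [Fintype s] [DecidableEq s]
    [Finite t] (G : Matrix t s ℝ) {π : s → ℝ} (hπ : ∀ k, 0 ≤ π k) :
    (G * diagonal π * Gᵀ).PosSemidef := by
  simpa [conjTranspose_eq_transpose_of_trivial] using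
    (PosSemidef.diagonal hπ).mul_mul_conjTranspose_same G

theorem rcmc_stmt10_general (n : ℕ) (K : Matrix (Fin n) (Fin n) ℝ) (π : Fin n → ℝ)
    (hoff : ∀ i j, i ≠ j → 0 ≤ K i j)
    (hcol : ∀ j, ∑ i, K i j = 0)
    (hπpos : ∀ i, 0 < π i)
    (hdb : K * Matrix.diagonal π = Matrix.diagonal π * Kᵀ)
    (S : Finset (Fin n))
    (hinv : IsUnit (K.submatrix ((↑) : ↥S → Fin n) ((↑) : ↥S → Fin n)).det) :
    let KSS := K.submatrix ((↑) : ↥S → Fin n) ((↑) : ↥S → Fin n)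
    let KST := K.submatrix ((↑) : ↥S → Fin n) ((↑) : ↥(Sᶜ) → Fin n)
    let KTS := K.submatrix ((↑) : ↥(Sᶜ) → Fin n) ((↑) : ↥S → Fin n)
    let M := 1 + KTS * KSS⁻¹ * KSS⁻¹ * KST
    let VTTA := (Matrix.diagonal (fun j : ↥(Sᶜ) => ∑ i : ↥(Sᶜ), M i j))⁻¹
    let VTTB := M⁻¹
    let psd : Matrix ↥(Sᶜ) ↥(Sᶜ) ℝ → Prop :=
      fun A => ∀ a : ↥(Sᶜ) → ℝ, 0 ≤ ∑ i, a i * A.mulVec a i / π ↑i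
    psd (M - 1) ∧ psd (VTTA⁻¹ - M) ∧ psd (VTTB⁻¹ - M) := by
  intro KSS KST KTS M VTTA VTTB psd
  have hπT : ∀ i : ↥(Sᶜ), π i ≠ 0 := fun i => (hπpos i).ne'
  have hKSS_inv : ∀ k l, KSS⁻¹ k l ≤ 0 :=
    inv_apply_nonpos_of_sum_nonpos (fun k => hπpos k) (submatrix_mul_diagonal_eq hdb _ _)
      (fun k l hkl => hoff k l (Subtype.coe_injective.ne hkl))
      (sum_subtype_apply_nonpos hoff hcol S) hinv
  set G := KTS * KSS⁻¹
  have hG : ∀ i k, G i k ≤ 0 := fun i k => Finset.sum_nonpos fun l _ =>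
    mul_nonpos_of_nonneg_of_nonpos (hoff i l fun h => Finset.mem_compl.1 i.2 (h ▸ l.2))
      (hKSS_inv l k)
  set H := G * diagonal (fun k : ↥S => π k) * Gᵀ
  have hgram : (M - 1) * diagonal (fun i : ↥(Sᶜ) => π i) = H := by
    rw [add_sub_cancel_left]
    exact mul_inv_mul_inv_mul_mul_diagonal (submatrix_mul_diagonal_eq hdb _ _)
      (submatrix_mul_diagonal_eq hdb _ _) hinv
  have hH : H.PosSemidef := posSemidef_mul_diagonal_mul_transpose G fun k => (hπpos k).le
  have hM : M * diagonal (fun i : ↥(Sᶜ) => π i) = diagonal (fun i : ↥(Sᶜ) => π i) + H := by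
    rw [← hgram, sub_mul, one_mul, add_sub_cancel]
  refine ⟨sum_mul_mulVec_div_nonneg_of_posSemidef hπT (hgram ▸ hH),
    sum_mul_mulVec_div_nonneg_of_posSemidef hπT ?_, fun a => ?_⟩
  · refine posSemidef_inv_inv_diagonal_sum_sub_mul_diagonal (fun i => hπpos i) hM ?_ fun i j => ?_
    · exact (conjTranspose_eq_transpose_of_trivial H).symm.trans hH.1
    · exact mul_diagonal_mul_transpose_apply_nonneg hG (fun k => (hπpos k).le) i j
  · have hMD : (M * diagonal (fun i : ↥(Sᶜ) => π i)).PosDef :=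
      hM ▸ ((posDef_diagonal_iff (d := fun i : ↥(Sᶜ) => π i)).2 fun i => hπpos i).add_posSemidef hH
    have hMu : IsUnit M.det := (isUnit_iff_isUnit_det M).1 (isUnit_of_mul_isUnit_left hMD.isUnit)
    simp [VTTB, nonsing_inv_nonsing_inv M hMu]

/-- With `M = I_T + K_TS K_SS⁻² K_ST`, we have `I_T ⪯ M` in the `π_T`-Löwner
order, and for both `V_TT = diag(1_Tᵀ M)⁻¹` (Type A) and `V_TT = M⁻¹` (Type B),
`M ⪯ V_TT⁻¹`, i.e. `V_TT⁻¹ − M` is positive semi-definite w.r.t. the `π_T`-inner product. -/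
theorem rcmc_stmt10 (n : ℕ) (K : Matrix (Fin n) (Fin n) ℝ) (π : Fin n → ℝ)
    (hoff : ∀ i j, i ≠ j → 0 ≤ K i j)
    (hcol : ∀ j, ∑ i, K i j = 0)
    (hπpos : ∀ i, 0 < π i) (hπsum : ∑ i, π i = 1)
    (hdb : K * Matrix.diagonal π = Matrix.diagonal π * Kᵀ)
    (S : Finset (Fin n))
    (hinv : IsUnit (K.submatrix ((↑) : ↥S → Fin n) ((↑) : ↥S → Fin n)).det) :
    let KSS := K.submatrix ((↑) : ↥S → Fin n) ((↑) : ↥S → Fin n)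
    let KST := K.submatrix ((↑) : ↥S → Fin n) ((↑) : ↥(Sᶜ) → Fin n)
    let KTS := K.submatrix ((↑) : ↥(Sᶜ) → Fin n) ((↑) : ↥S → Fin n)
    let M := 1 + KTS * KSS⁻¹ * KSS⁻¹ * KST
    let VTTA := (Matrix.diagonal (fun j : ↥(Sᶜ) => ∑ i : ↥(Sᶜ), M i j))⁻¹
    let VTTB := M⁻¹
    let psd : Matrix ↥(Sᶜ) ↥(Sᶜ) ℝ → Prop :=
      fun A => ∀ a : ↥(Sᶜ) → ℝ, 0 ≤ ∑ i, a i * A.mulVec a i / π ↑i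
    psd (M - 1) ∧ psd (VTTA⁻¹ - M) ∧ psd (VTTB⁻¹ - M) :=
  rcmc_stmt10_general n K π hoff hcol hπpos hdb S hinv
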